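/- arXiv:1209.3530 — 2 statements merged into one kernel-verified Lean document; each statement's English description precedes it below -/
import Mathlib

section
/- Let A be a Banach algebra and let I be a left ideal of A such that the closure of I is finitely generated as a left ideal. Then I is closed in A. -/
noncomputable section

/-- A left ideal of an algebra `A`, encoded as a `ℂ`-submodule closed under
left multiplication by arbitrary elements of `A`. -/
def IsLeftIdeal {A : Type*} [NonUnitalNonAssocSemiring A] [Module ℂ A]
    (I : Submodule ℂ A) : Prop :=
  ∀ a : A, ∀ x ∈ I, a * x ∈ I

/-- The left ideal generated by a set `S` (equivalently `⟨S⟩ = A♯·S`). -/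
def leftIdealGen {A : Type*} [NonUnitalNonAssocSemiring A] [Module ℂ A]
    (S : Set A) : Submodule ℂ A :=
  sInf {I : Submodule ℂ A | IsLeftIdeal I ∧ S ⊆ ↑I}

/-- A left ideal is finitely generated if it is generated by a finite subset of itself. -/
def IsFGLeftIdeal {A : Type*} [NonUnitalNonAssocSemiring A] [Module ℂ A]
    (I : Submodule ℂ A) : Prop :=
  ∃ S : Finset A, ↑S ⊆ (I : Set A) ∧ leftIdealGen (↑S : Set A) = I

/-- A left ideal is countably generated if it is generated by a countable subset of itself. -/
def IsCGLeftIdeal {A : Type*} [NonUnitalNonAssocSemiring A] [Module ℂ A]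
    (I : Submodule ℂ A) : Prop :=
  ∃ S : Set A, S.Countable ∧ S ⊆ (I : Set A) ∧ leftIdealGen S = I

/-- Membership in `𝔐∞(A)`: a maximal element of the family of
non-finitely-generated left ideals. -/
def IsMaxNonFG {A : Type*} [NonUnitalNonAssocSemiring A] [Module ℂ A]
    (M : Submodule ℂ A) : Prop :=
  IsLeftIdeal M ∧ ¬ IsFGLeftIdeal M ∧
    ∀ J : Submodule ℂ A, IsLeftIdeal J → ¬ IsFGLeftIdeal J → M ≤ J → J = M

/-- Membership in `𝔑∞(A)`: a maximal element of the family of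
non-countably-generated left ideals. -/
def IsMaxNonCG {A : Type*} [NonUnitalNonAssocSemiring A] [Module ℂ A]
    (M : Submodule ℂ A) : Prop :=
  IsLeftIdeal M ∧ ¬ IsCGLeftIdeal M ∧
    ∀ J : Submodule ℂ A, IsLeftIdeal J → ¬ IsCGLeftIdeal J → M ≤ J → J = M

/-- `M` is a maximal left ideal. -/
def IsMaxLeftIdeal {A : Type*} [NonUnitalNonAssocSemiring A] [Module ℂ A]
    (M : Submodule ℂ A) : Prop :=
  IsLeftIdeal M ∧ M ≠ ⊤ ∧ ∀ J : Submodule ℂ A, IsLeftIdeal J → M < J → J = ⊤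

/-! The closure `J` of `I` is generated by finitely many `aᵢ`, so `(λ, b) ↦ ∑ λᵢ aᵢ + bᵢ aᵢ`
maps `(ℂ × A)ⁿ` onto the Banach space `J`. By the open mapping theorem, surjectivity onto `J`
survives small perturbations of this operator, hence of the `aᵢ`: choosing `cᵢ ∈ I` close to `aᵢ`,
the left ideal generated by the `cᵢ` is still all of `J`, while it is contained in `I`. -/

open Filter Topology Set Metric

namespace ContinuousLinearMap

variable {𝕜 E F : Type*} [NontriviallyNormedField 𝕜]
  [NormedAddCommGroup E] [NormedSpace 𝕜 E] [CompleteSpace E]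
  [NormedAddCommGroup F] [NormedSpace 𝕜 F]

theorem eventually_surjective [CompleteSpace F] {T : E →L[𝕜] F} (hT : Function.Surjective T) :
    ∀ᶠ T' : E →L[𝕜] F in 𝓝 T, Function.Surjective T' := by
  set g := T.nonlinearRightInverseOfSurjective (LinearMap.range_eq_top.2 hT)
  have hg : 0 < g.nnnorm := T.nonlinearRightInverseOfSurjective_nnnorm_pos _
  filter_upwards [Metric.ball_mem_nhds T (inv_pos.2 (NNReal.coe_pos.2 hg))] with T' hT'
  rw [mem_ball, dist_eq_norm] at hT'
  have happrox : ApproximatesLinearOn T' T univ ‖T' - T‖₊ := fun x _ y _ => by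
    simpa [← map_sub] using (T' - T).le_opNorm (x - y)
  have hball :=
    happrox.surjOn_closedBall_of_nonlinearRightInverse g (b := 0) zero_le_one (subset_univ _)
  refine LinearMap.range_eq_top.1 <|
    Submodule.eq_top_of_nonempty_interior' _ ⟨T' 0, mem_interior_iff_mem_nhds.2 ?_⟩
  refine mem_of_superset (closedBall_mem_nhds _ ?_) (hball.subset_range.trans ?_)
  · simpa using hT'
  · rintro _ ⟨x, _, rfl⟩; exact LinearMap.mem_range_self _ x

theorem eventually_range_eq_of_range_le {J : Submodule 𝕜 F} [CompleteSpace J]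
    {T : E →L[𝕜] F} (hT : T.range = J) :
    ∀ᶠ T' : E →L[𝕜] F in 𝓝 T, T'.range ≤ J → T'.range = J := by
  set T₀ : E →L[𝕜] J := T.codRestrict J fun x => hT ▸ ⟨x, rfl⟩
  have hT₀ : Function.Surjective T₀ := fun y => by
    obtain ⟨x, hx⟩ := hT.ge y.2
    exact ⟨x, Subtype.ext hx⟩
  have hincl := (LinearIsometry.postcomp (E := E) (σ₁₂ := RingHom.id 𝕜) J.subtypeₗᵢ).isometry
  have := hincl.isUniformInducing.isInducing.nhds_eq_comap T₀ ▸ eventually_surjective hT₀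
  filter_upwards [eventually_comap.1 this] with T' hT' hJ
  refine le_antisymm hJ fun y hy => ?_
  obtain ⟨x, hx⟩ := hT' (T'.codRestrict J fun x => hJ ⟨x, rfl⟩) rfl ⟨y, hy⟩
  exact ⟨x, congrArg Subtype.val hx⟩

end ContinuousLinearMap

section LeftIdeal

variable {A : Type*} [NonUnitalNonAssocSemiring A] [Module ℂ A]

theorem isLeftIdeal_leftIdealGen (S : Set A) : IsLeftIdeal (leftIdealGen S) := fun a _ hx =>
  Submodule.mem_sInf.2 fun _ hI => hI.1 a _ (Submodule.mem_sInf.1 hx _ hI)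

theorem leftIdealGen_le {S : Set A} {I : Submodule ℂ A} (hI : IsLeftIdeal I) (hS : S ⊆ I) :
    leftIdealGen S ≤ I :=
  sInf_le ⟨hI, hS⟩

theorem subset_leftIdealGen (S : Set A) : S ⊆ leftIdealGen S := fun _ hx =>
  Submodule.mem_sInf.2 fun _ hI => hI.2 hx

end LeftIdeal

section LeftCombination

variable {A : Type*} [NonUnitalNormedRing A] [NormedSpace ℂ A]
  [IsScalarTower ℂ A A] [SMulCommClass ℂ A A] {ι : Type*} [Fintype ι]

/-- A pair `(λ, b) : ℂ × A` stands for the element `λ + b` of the unitization `A♯`. -/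
def leftCombination (a : ι → A) : (ι → ℂ × A) →L[ℂ] A :=
  ∑ i, ((ContinuousLinearMap.fst ℂ ℂ A).smulRight (a i) +
    (ContinuousLinearMap.mul ℂ A).flip (a i) ∘L ContinuousLinearMap.snd ℂ ℂ A) ∘L
      ContinuousLinearMap.proj i

@[simp]
theorem leftCombination_apply (a : ι → A) (f : ι → ℂ × A) :
    leftCombination a f = ∑ i, ((f i).1 • a i + (f i).2 * a i) := by
  simp [leftCombination]

theorem continuous_leftCombination : Continuous (leftCombination : (ι → A) → _) := by
  unfold leftCombination
  fun_prop

theorem isLeftIdeal_range_leftCombination (a : ι → A) :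
    IsLeftIdeal (leftCombination a).range := by
  rintro b _ ⟨f, rfl⟩
  refine ⟨fun i => (0, (f i).1 • b + b * (f i).2), ?_⟩
  simp [Finset.mul_sum, mul_add, add_mul, smul_mul_assoc, mul_smul_comm, mul_assoc]

theorem range_leftCombination (a : ι → A) :
    (leftCombination a).range = leftIdealGen (Set.range a) := by
  classical
  refine le_antisymm ?_ (leftIdealGen_le (isLeftIdeal_range_leftCombination a) ?_)
  · rintro _ ⟨f, rfl⟩
    have ha : ∀ i, a i ∈ leftIdealGen (Set.range a) := fun i => subset_leftIdealGen _ ⟨i, rfl⟩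
    simp only [ContinuousLinearMap.coe_coe, leftCombination_apply]
    exact Submodule.sum_mem _ fun i _ =>
      add_mem (Submodule.smul_mem _ _ (ha i)) (isLeftIdeal_leftIdealGen _ _ _ (ha i))
  · rintro _ ⟨i, rfl⟩
    refine ⟨Pi.single i (1, 0), ?_⟩
    simp [Pi.single_apply, apply_ite Prod.fst, apply_ite Prod.snd, ite_smul]

end LeftCombination

/-- Sinclair–Tullo / Dales, Proposition 2.6.37.
Let `A` be a Banach algebra and `I` a left ideal of `A` whose closure is finitely
generated as a left ideal. Then `I` is closed in `A`. -/
theorem closure_fg_implies_closed {A : Type*} [NonUnitalNormedRing A] [NormedSpace ℂ A]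
    [IsScalarTower ℂ A A] [SMulCommClass ℂ A A] [CompleteSpace A]
    (I : Submodule ℂ A) (hI : IsLeftIdeal I)
    (hfg : IsFGLeftIdeal I.topologicalClosure) :
    IsClosed (I : Set A) := by
  obtain ⟨S, hSJ, hgen⟩ := hfg
  have : CompleteSpace I.topologicalClosure := I.isClosed_topologicalClosure.completeSpace_coe
  let a : S → A := Subtype.val
  have ha : (leftCombination a).range = I.topologicalClosure := by
    rw [range_leftCombination, Subtype.range_coe, hgen]
  have hnear := (continuous_leftCombination.tendsto a).eventually
    (ContinuousLinearMap.eventually_range_eq_of_range_le ha)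
  have ha_mem : a ∈ closure (Set.univ.pi fun _ => (I : Set A)) := by
    rw [closure_pi_set]
    exact fun i _ => hSJ i.2
  obtain ⟨c, hcI, hc⟩ := (mem_closure_iff_frequently.1 ha_mem).and_eventually hnear |>.exists
  have hc_range : (leftCombination c).range ≤ I := by
    rw [range_leftCombination]
    exact leftIdealGen_le hI (Set.range_subset_iff.2 fun i => hcI i trivial)
  have hJI : I.topologicalClosure ≤ I := (hc (hc_range.trans I.le_topologicalClosure)) ▸ hc_range
  exact isClosed_of_closure_subset (I.topologicalClosure_coe ▸ hJI)
end
end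

section
/- Let A be a unital, infinite-dimensional algebra, and suppose some left ideal M of A that is maximal among non-finitely-generated left ideals has finite codimension in A. Then A has a maximal left ideal that is not finitely generated. -/
noncomputable section

/-!
If every maximal left ideal of a ring is finitely generated, then every simple module
`R ⧸ 𝔪` is finitely presented, and since finitely presented modules are closed under
extensions, so is every module of finite length. A left ideal `I` with `R ⧸ I` of finite
length is then finitely generated, being the kernel of a surjection from a finitely
generated module onto a finitely presented one. A left ideal of finite codimension in a
`ℂ`-algebra has a quotient of finite length, so the finite-codimension element of `𝔐∞(A)`
would be finitely generated; hence some maximal left ideal is not.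
-/

open Submodule

section FinitePresentation

variable {R M : Type*} [Ring R] [AddCommGroup M] [Module R M]

theorem Module.finitePresentation_of_isSimpleModule
    (hR : ∀ N : Submodule R R, IsCoatom N → N.FG) [IsSimpleModule R M] :
    Module.FinitePresentation R M := by
  have := IsSimpleModule.nontrivial R M
  obtain ⟨m, hm⟩ := exists_ne (0 : M)
  let φ := LinearMap.toSpanSingleton R M m
  have hφ : Function.Surjective φ := IsSimpleModule.toSpanSingleton_surjective R hm
  have : IsSimpleModule R (R ⧸ LinearMap.ker φ) :=
    IsSimpleModule.congr (φ.quotKerEquivOfSurjective hφ)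
  exact (Module.FinitePresentation.fg_ker_iff φ hφ).mp (hR _ (isSimpleModule_iff_isCoatom.mp this))

theorem IsFiniteLength.finitePresentation (hR : ∀ N : Submodule R R, IsCoatom N → N.FG)
    (hM : IsFiniteLength R M) : Module.FinitePresentation R M := by
  induction hM with
  | of_subsingleton =>
    exact Module.finitePresentation_of_surjective (0 : R →ₗ[R] _)
      (Function.surjective_to_subsingleton _) (by simpa using Module.Finite.fg_top)
  | @of_simple_quotient M _ _ N _ _ ih =>
    have : Module.FinitePresentation R N := ih
    have : Module.FinitePresentation R (M ⧸ N) := Module.finitePresentation_of_isSimpleModule hR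
    have : Module.FinitePresentation R (LinearMap.ker N.mkQ) :=
      .of_equiv (LinearEquiv.ofEq _ _ (ker_mkQ N).symm)
    exact Module.finitePresentation_of_ker N.mkQ N.mkQ_surjective

theorem Submodule.fg_of_isFiniteLength_quotient (hR : ∀ N : Submodule R R, IsCoatom N → N.FG)
    {I : Submodule R R} (hI : IsFiniteLength R (R ⧸ I)) : I.FG := by
  have := hI.finitePresentation hR
  simpa using Module.FinitePresentation.fg_ker I.mkQ I.mkQ_surjective

end FinitePresentation

theorem isFiniteLength_of_finiteDimensional (K : Type*) {R M : Type*} [Field K] [Ring R]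
    [Algebra K R] [AddCommGroup M] [Module K M] [Module R M] [IsScalarTower K R M]
    [FiniteDimensional K M] : IsFiniteLength R M :=
  isFiniteLength_iff_isNoetherian_isArtinian.mpr
    ⟨isNoetherian_of_tower K inferInstance, isArtinian_of_tower K inferInstance⟩

section LeftIdeal

variable {A : Type*} [Semiring A] [Algebra ℂ A]

theorem isLeftIdeal_restrictScalars (I : Submodule A A) : IsLeftIdeal (I.restrictScalars ℂ) :=
  fun a _ hx => I.smul_mem a hx

theorem IsLeftIdeal.exists_restrictScalars_eq {I : Submodule ℂ A} (hI : IsLeftIdeal I) :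
    ∃ J : Submodule A A, J.restrictScalars ℂ = I :=
  ⟨{ I with smul_mem' := hI }, rfl⟩

theorem leftIdealGen_eq_restrictScalars_span (S : Set A) :
    leftIdealGen S = (span A S).restrictScalars ℂ := by
  refine le_antisymm (sInf_le ⟨isLeftIdeal_restrictScalars _, subset_span⟩) (le_sInf ?_)
  rintro _ ⟨hI, hS⟩
  obtain ⟨J, rfl⟩ := hI.exists_restrictScalars_eq
  exact restrictScalars_mono ℂ (span_le.mpr hS)

theorem isFGLeftIdeal_restrictScalars_iff {I : Submodule A A} :
    IsFGLeftIdeal (I.restrictScalars ℂ) ↔ I.FG := by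
  simp only [IsFGLeftIdeal, leftIdealGen_eq_restrictScalars_span,
    (restrictScalars_injective ℂ A A).eq_iff, coe_restrictScalars]
  exact ⟨fun ⟨S, _, h⟩ => ⟨S, h⟩, fun ⟨S, h⟩ => ⟨S, h ▸ subset_span, h⟩⟩

theorem IsCoatom.isMaxLeftIdeal_restrictScalars {N : Submodule A A} (hN : IsCoatom N) :
    IsMaxLeftIdeal (N.restrictScalars ℂ) := by
  refine ⟨isLeftIdeal_restrictScalars N, by simpa using hN.1, fun J hJ hNJ => ?_⟩
  obtain ⟨J, rfl⟩ := hJ.exists_restrictScalars_eq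
  simpa using hN.2 J ((restrictScalars_lt ℂ).mp hNJ)

end LeftIdeal

theorem exists_nonFG_maximal_leftIdeal_general {A : Type*} [Ring A] [Algebra ℂ A]
    (M : Submodule ℂ A) (hM : IsMaxNonFG M) (hcodim : FiniteDimensional ℂ (A ⧸ M)) :
    ∃ N : Submodule ℂ A, IsMaxLeftIdeal N ∧ ¬ IsFGLeftIdeal N := by
  by_contra! hmaxFG
  obtain ⟨M, rfl⟩ := hM.1.exists_restrictScalars_eq
  have hcoatomFG (N : Submodule A A) (hN : IsCoatom N) : N.FG :=
    isFGLeftIdeal_restrictScalars_iff.mp (hmaxFG _ hN.isMaxLeftIdeal_restrictScalars)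
  have : FiniteDimensional ℂ (A ⧸ M) := .equiv (Quotient.restrictScalarsEquiv ℂ M)
  exact hM.2.1 (isFGLeftIdeal_restrictScalars_iff.mpr
    (fg_of_isFiniteLength_quotient hcoatomFG (isFiniteLength_of_finiteDimensional ℂ)))

/-- Let `A` be a unital, infinite-dimensional algebra, and suppose
some element of `𝔐∞(A)` has finite codimension in `A`. Then `A` has a maximal left
ideal that is not finitely generated. -/
theorem exists_nonFG_maximal_leftIdeal {A : Type*} [Ring A] [Algebra ℂ A]
    (hA : ¬ FiniteDimensional ℂ A)
    (M : Submodule ℂ A) (hM : IsMaxNonFG M) (hcodim : FiniteDimensional ℂ (A ⧸ M)) :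
    ∃ N : Submodule ℂ A, IsMaxLeftIdeal N ∧ ¬ IsFGLeftIdeal N :=
  exists_nonFG_maximal_leftIdeal_general M hM hcodim
end
end
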